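/- Lemma (reduced density operator): with the setup of the general formalism, for any partition {1,…,m} = A ⊔ B of the parties, the reduced density operator of Ψ on H_A = ⊗_{k∈A} H_k (the partial trace of the rank-one projection onto Ψ over H_B = ⊗_{k∈B} H_k) equals ρ_A = (1/(|𝒢|·|𝒢_Φ|)) · ∑_{u∈𝒢} ∑_{v∈𝒢_Φ(B)} O_A^u |φ_A⟩⟨φ_A| O_A^{v u^{−1}}, where O_A^t = ⊗_{k∈A} O_k^t and φ_A = ⊗_{k∈A} φ_k. -/

import Mathlib

/-!
Expanding Ψ, the reduced density operator is a double sum over t, s ∈ 𝒢 of partial traces of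
|O^t Φ⟩⟨O^s Φ|. Both vectors are product vectors, so such a partial trace is
|O_A^t φ_A⟩⟨O_A^s φ_A| times the overlap ∏_{k ∈ B} ⟨O_k^s φ_k, O_k^t φ_k⟩. By unitarity and the
equal-or-orthogonal hypothesis each factor is 1 or 0, and the product is 1 exactly when
O_k^{s⁻¹t} φ_k = φ_k for all k ∈ B, i.e. when s⁻¹t ∈ 𝒢_Φ(B) (the same overlap argument shows that
O_B^v Φ = Φ forces every factor to be fixed). Writing s = u v⁻¹ and using
(O_A^{u v⁻¹})† = O_A^{v u⁻¹} gives the formula.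
-/

open scoped BigOperators
open scoped Classical

noncomputable section

namespace GenForm

variable {G : Type} [Group G] [Fintype G] {n m : ℕ}
  {ι : Fin m → Type} [∀ k, Fintype (ι k)] [∀ k, DecidableEq (ι k)]

/-- `O` assigns to every party `k` a unitary representation of 𝒢 = G^{×n} on the
(concretely modelled) finite-dimensional Hilbert space H_k = (ι k → ℂ). -/
def IsLocalRep (O : (k : Fin m) → (Fin n → G) → Matrix (ι k) (ι k) ℂ) : Prop :=
  ∀ k : Fin m,
    (∀ t, O k t ∈ Matrix.unitaryGroup (ι k) ℂ) ∧
    O k 1 = 1 ∧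
    ∀ t u, O k (t * u) = O k t * O k u

/-- The product vector Φ = φ₁ ⊗ ⋯ ⊗ φ_m, as an amplitude function. -/
def prodVec (φ : (k : Fin m) → ι k → ℂ) : ((k : Fin m) → ι k) → ℂ :=
  fun x => ∏ k, φ k (x k)

/-- The vector O^t Φ = ⊗_k O_k^t φ_k. -/
def actVec (O : (k : Fin m) → (Fin n → G) → Matrix (ι k) (ι k) ℂ)
    (φ : (k : Fin m) → ι k → ℂ) (t : Fin n → G) : ((k : Fin m) → ι k) → ℂ :=
  fun x => ∏ k, ((O k t).mulVec (φ k)) (x k)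

/-- The vector O_X^t Φ, where the truncated operator acts as O_k^t for k ∈ X and as
the identity elsewhere. -/
def actVecOn (O : (k : Fin m) → (Fin n → G) → Matrix (ι k) (ι k) ℂ)
    (φ : (k : Fin m) → ι k → ℂ) (X : Finset (Fin m)) (t : Fin n → G) :
    ((k : Fin m) → ι k) → ℂ :=
  fun x => ∏ k, if k ∈ X then ((O k t).mulVec (φ k)) (x k) else φ k (x k)

/-- Each local vector O_k^t φ_k and O_k^u φ_k is either equal or orthogonal. -/
def OrthCond (O : (k : Fin m) → (Fin n → G) → Matrix (ι k) (ι k) ℂ)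
    (φ : (k : Fin m) → ι k → ℂ) : Prop :=
  ∀ (k : Fin m) (t u : Fin n → G),
    (O k t).mulVec (φ k) = (O k u).mulVec (φ k) ∨
    ∑ x : ι k, (starRingEnd ℂ) (((O k t).mulVec (φ k)) x) * ((O k u).mulVec (φ k)) x = 0

/-- The global stabiliser 𝒢_Φ = { t : O^t Φ = Φ }. -/
def globalStab (O : (k : Fin m) → (Fin n → G) → Matrix (ι k) (ι k) ℂ)
    (φ : (k : Fin m) → ι k → ℂ) : Set (Fin n → G) :=
  { t | actVec O φ t = prodVec φ }

/-- The local stabiliser 𝒢_Φ(X) = { t : O_X^t Φ = Φ }. -/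
def localStab (O : (k : Fin m) → (Fin n → G) → Matrix (ι k) (ι k) ℂ)
    (φ : (k : Fin m) → ι k → ℂ) (X : Finset (Fin m)) : Set (Fin n → G) :=
  { t | actVecOn O φ X t = prodVec φ }

/-- The symmetrized state Ψ = (|𝒢|·|𝒢_Φ|)^{-1/2} ∑_{t∈𝒢} O^t Φ. -/
def Psi (O : (k : Fin m) → (Fin n → G) → Matrix (ι k) (ι k) ℂ)
    (φ : (k : Fin m) → ι k → ℂ) : ((k : Fin m) → ι k) → ℂ :=
  fun x => (((Real.sqrt ((Fintype.card G) ^ n * Nat.card (globalStab O φ)))⁻¹ : ℝ) : ℂ) *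
    ∑ t : Fin n → G, actVec O φ t x

/-- A product state of the m parties. -/
def IsProd (Φ : ((k : Fin m) → ι k) → ℂ) : Prop :=
  ∃ χ : (k : Fin m) → ι k → ℂ,
    (∀ k, ∑ x : ι k, ‖χ k x‖ ^ 2 = 1) ∧
    ∀ x, Φ x = ∏ k, χ k (x k)

/-- Maximal overlap with product states of the parties. -/
def LMax (ψ : ((k : Fin m) → ι k) → ℂ) : ℝ :=
  sSup { r : ℝ | ∃ Φ, IsProd Φ ∧
    r = ‖∑ x : (k : Fin m) → ι k, (starRingEnd ℂ) (Φ x) * ψ x‖ }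

/-- Geometric entanglement. -/
def EG (ψ : ((k : Fin m) → ι k) → ℂ) : ℝ :=
  - Real.logb 2 (LMax ψ ^ 2)

end GenForm

namespace GenForm

variable {G : Type} [Group G] [Fintype G] {n m : ℕ}
  {ι : Fin m → Type} [∀ k, Fintype (ι k)] [∀ k, DecidableEq (ι k)]

/-- Glue a configuration on the parties in `A` with one on the parties outside `A`. -/
def glue (A : Finset (Fin m)) (xA : (k : { k : Fin m // k ∈ A }) → ι k.1)
    (zB : (k : { k : Fin m // k ∉ A }) → ι k.1) : (k : Fin m) → ι k :=
  fun k => if h : k ∈ A then xA ⟨k, h⟩ else zB ⟨k, h⟩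

/-- The reduced density operator of a state ψ on the parties in `A`: the partial trace
of the rank-one projection |ψ⟩⟨ψ| over the parties outside `A`. -/
def rhoA (ψ : ((k : Fin m) → ι k) → ℂ) (A : Finset (Fin m)) :
    Matrix ((k : { k : Fin m // k ∈ A }) → ι k.1)
      ((k : { k : Fin m // k ∈ A }) → ι k.1) ℂ :=
  Matrix.of fun xA yA =>
    ∑ zB : (k : { k : Fin m // k ∉ A }) → ι k.1,
      ψ (glue A xA zB) * (starRingEnd ℂ) (ψ (glue A yA zB))

/-- The operator O_A^t = ⊗_{k∈A} O_k^t on the parties in `A`. -/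
def OAmat (O : (k : Fin m) → (Fin n → G) → Matrix (ι k) (ι k) ℂ)
    (A : Finset (Fin m)) (t : Fin n → G) :
    Matrix ((k : { k : Fin m // k ∈ A }) → ι k.1)
      ((k : { k : Fin m // k ∈ A }) → ι k.1) ℂ :=
  Matrix.of fun xA yA => ∏ k : { k : Fin m // k ∈ A }, O k.1 t (xA k) (yA k)

/-- The vector φ_A = ⊗_{k∈A} φ_k. -/
def phiA (φ : (k : Fin m) → ι k → ℂ) (A : Finset (Fin m)) :
    ((k : { k : Fin m // k ∈ A }) → ι k.1) → ℂ :=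
  fun xA => ∏ k : { k : Fin m // k ∈ A }, φ k.1 (xA k)

end GenForm

namespace GenForm

open Matrix

variable {G : Type} {n m : ℕ} {ι : Fin m → Type}

theorem star_dotProduct_self_eq_one {α : Type} [Fintype α] {w : α → ℂ}
    (hw : ∑ x, ‖w x‖ ^ 2 = 1) : star w ⬝ᵥ w = 1 := by
  simp only [dotProduct, Pi.star_apply, Complex.star_def, Complex.conj_mul']
  exact_mod_cast hw

theorem prod_glue (A : Finset (Fin m)) (f : (k : Fin m) → ι k → ℂ)
    (xA : (k : { k : Fin m // k ∈ A }) → ι k.1) (zB : (k : { k : Fin m // k ∉ A }) → ι k.1) :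
    ∏ k, f k (glue A xA zB k)
      = (∏ k : { k : Fin m // k ∈ A }, f k.1 (xA k)) * ∏ k : { k : Fin m // k ∉ A }, f k.1 (zB k) := by
  rw [← Finset.prod_mul_prod_compl A, Finset.prod_subtype A (fun _ => Iff.rfl),
    Finset.prod_subtype Aᶜ (fun _ => Finset.mem_compl)]
  congr 1
  · exact Finset.prod_congr rfl fun k _ => by rw [glue, dif_pos k.2]
  · exact Finset.prod_congr rfl fun k _ => by rw [glue, dif_neg k.2]

variable [∀ k, Fintype (ι k)]

section ProductVectors

theorem star_prodVec_dotProduct_prodVec (a b : (k : Fin m) → ι k → ℂ) :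
    star (prodVec a) ⬝ᵥ prodVec b = ∏ k, star (a k) ⬝ᵥ b k := by
  simp only [dotProduct, prodVec, Pi.star_apply, star_prod, ← Finset.prod_mul_distrib]
  exact (Fintype.prod_sum fun k w => star (a k w) * b k w).symm

/-- The partial trace over the parties outside `A` of the operator `|ψ⟩⟨χ|`. -/
def reducedOuter (ψ χ : ((k : Fin m) → ι k) → ℂ) (A : Finset (Fin m)) :
    Matrix ((k : { k : Fin m // k ∈ A }) → ι k.1) ((k : { k : Fin m // k ∈ A }) → ι k.1) ℂ :=
  Matrix.of fun xA yA =>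
    ∑ zB : (k : { k : Fin m // k ∉ A }) → ι k.1, ψ (glue A xA zB) * star (χ (glue A yA zB))

theorem rhoA_eq_reducedOuter (ψ : ((k : Fin m) → ι k) → ℂ) (A : Finset (Fin m)) :
    rhoA ψ A = reducedOuter ψ ψ A := rfl

theorem reducedOuter_mul_sum {τ : Type} [Fintype τ] (c d : ℂ)
    (ψ χ : τ → ((k : Fin m) → ι k) → ℂ) (A : Finset (Fin m)) :
    reducedOuter (fun x => c * ∑ t, ψ t x) (fun x => d * ∑ s, χ s x) A
      = (c * star d) • ∑ t, ∑ s, reducedOuter (ψ t) (χ s) A := by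
  ext x y
  simp only [reducedOuter, of_apply, Matrix.smul_apply, Matrix.sum_apply, smul_eq_mul,
    star_mul', star_sum, mul_mul_mul_comm _ (∑ t, _), Finset.sum_mul_sum]
  rw [← Finset.mul_sum, Finset.sum_comm]
  exact congrArg _ (Finset.sum_congr rfl fun t _ => Finset.sum_comm)

theorem reducedOuter_prodVec (a b : (k : Fin m) → ι k → ℂ) (A : Finset (Fin m)) :
    reducedOuter (prodVec a) (prodVec b) A
      = (∏ k : { k : Fin m // k ∉ A }, star (b k) ⬝ᵥ a k) •
          vecMulVec (phiA a A) (star (phiA b A)) := by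
  ext x y
  simp only [reducedOuter, of_apply, Matrix.smul_apply, vecMulVec_apply, prodVec, prod_glue, phiA,
    Pi.star_apply, star_mul', star_prod, dotProduct, smul_eq_mul]
  rw [Fintype.prod_sum, Finset.sum_mul]
  refine Finset.sum_congr rfl fun zB _ => ?_
  rw [Finset.prod_mul_distrib]
  ring

theorem OAmat_mulVec_phiA (O : (k : Fin m) → (Fin n → G) → Matrix (ι k) (ι k) ℂ)
    (ψ : (k : Fin m) → ι k → ℂ) (A : Finset (Fin m)) (t : Fin n → G) :
    OAmat O A t *ᵥ phiA ψ A = phiA (fun k => O k t *ᵥ ψ k) A := by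
  ext x
  simp only [mulVec, dotProduct, OAmat, of_apply, phiA, ← Finset.prod_mul_distrib]
  exact (Fintype.prod_sum fun (k : { k : Fin m // k ∈ A }) w => O k t (x k) w * ψ k w).symm

variable {O : (k : Fin m) → (Fin n → G) → Matrix (ι k) (ι k) ℂ} {φ : (k : Fin m) → ι k → ℂ}

theorem actVec_eq_prodVec (t : Fin n → G) :
    actVec O φ t = prodVec fun k => O k t *ᵥ φ k := rfl

theorem actVecOn_eq_prodVec (X : Finset (Fin m)) (v : Fin n → G) :
    actVecOn O φ X v = prodVec fun k => if k ∈ X then O k v *ᵥ φ k else φ k := by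
  funext x
  simp only [actVecOn, prodVec, apply_ite (fun f : ι _ → ℂ => f (x _))]

end ProductVectors

section Representation

variable [Group G] [∀ k, DecidableEq (ι k)] {O : (k : Fin m) → (Fin n → G) → Matrix (ι k) (ι k) ℂ}

theorem IsLocalRep.mulVec_mul (hO : IsLocalRep O) (k : Fin m) (s t : Fin n → G)
    (w : ι k → ℂ) : O k (s * t) *ᵥ w = O k s *ᵥ (O k t *ᵥ w) := by
  rw [(hO k).2.2, mulVec_mulVec]

theorem IsLocalRep.one_mulVec (hO : IsLocalRep O) (k : Fin m) (w : ι k → ℂ) :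
    O k 1 *ᵥ w = w := by
  rw [(hO k).2.1, Matrix.one_mulVec]

theorem IsLocalRep.conjTranspose_eq (hO : IsLocalRep O) (k : Fin m) (t : Fin n → G) :
    (O k t)ᴴ = O k t⁻¹ :=
  left_inv_eq_right_inv (mem_unitaryGroup_iff'.mp ((hO k).1 t))
    (by rw [← (hO k).2.2, mul_inv_cancel, (hO k).2.1])

theorem IsLocalRep.star_mulVec_dotProduct_mulVec (hO : IsLocalRep O) (k : Fin m)
    (t : Fin n → G) (v w : ι k → ℂ) :
    star (O k t *ᵥ v) ⬝ᵥ (O k t *ᵥ w) = star v ⬝ᵥ w := by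
  rw [star_mulVec, dotProduct_mulVec, vecMul_vecMul, ← star_eq_conjTranspose,
    mem_unitaryGroup_iff'.mp ((hO k).1 t), vecMul_one]

theorem IsLocalRep.mulVec_eq_mulVec_iff (hO : IsLocalRep O) (k : Fin m) (s t : Fin n → G)
    (w : ι k → ℂ) : O k s *ᵥ w = O k t *ᵥ w ↔ O k (s⁻¹ * t) *ᵥ w = w := by
  constructor
  · intro h
    rw [hO.mulVec_mul, ← h, ← hO.mulVec_mul, inv_mul_cancel, hO.one_mulVec]
  · intro h
    conv_lhs => rw [← h]
    rw [← hO.mulVec_mul, mul_inv_cancel_left]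

theorem IsLocalRep.OAmat_eq_conjTranspose (hO : IsLocalRep O) (A : Finset (Fin m))
    (t : Fin n → G) : OAmat O A t = (OAmat O A t⁻¹)ᴴ := by
  ext x y
  simp only [OAmat, conjTranspose_apply, of_apply, star_prod]
  refine Finset.prod_congr rfl fun k _ => ?_
  rw [← conjTranspose_apply, hO.conjTranspose_eq, inv_inv]

theorem IsLocalRep.OAmat_mul_vecMulVec_mul_OAmat (hO : IsLocalRep O) (φ : (k : Fin m) → ι k → ℂ)
    (A : Finset (Fin m)) (u w : Fin n → G) :
    OAmat O A u * vecMulVec (phiA φ A) (star (phiA φ A)) * OAmat O A w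
      = vecMulVec (phiA (fun k => O k u *ᵥ φ k) A) (star (phiA (fun k => O k w⁻¹ *ᵥ φ k) A)) := by
  rw [mul_vecMulVec, vecMulVec_mul, hO.OAmat_eq_conjTranspose A w, ← star_mulVec,
    OAmat_mulVec_phiA, OAmat_mulVec_phiA]

variable {φ : (k : Fin m) → ι k → ℂ}

theorem star_mulVec_dotProduct_mulVec_eq_ite (hO : IsLocalRep O)
    (hφ : ∀ k, ∑ x : ι k, ‖φ k x‖ ^ 2 = 1) (horth : OrthCond O φ) (k : Fin m)
    (s t : Fin n → G) :
    star (O k s *ᵥ φ k) ⬝ᵥ (O k t *ᵥ φ k) = if O k s *ᵥ φ k = O k t *ᵥ φ k then 1 else 0 := by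
  split_ifs with h
  · rw [h, hO.star_mulVec_dotProduct_mulVec, star_dotProduct_self_eq_one (hφ k)]
  · exact (horth k s t).resolve_left h

theorem mem_localStab_iff (hO : IsLocalRep O) (hφ : ∀ k, ∑ x : ι k, ‖φ k x‖ ^ 2 = 1)
    (horth : OrthCond O φ) (X : Finset (Fin m)) (v : Fin n → G) :
    v ∈ localStab O φ X ↔ ∀ k ∈ X, O k v *ᵥ φ k = φ k := by
  have overlap : star (actVecOn O φ X v) ⬝ᵥ prodVec φ
      = if ∀ k ∈ X, O k v *ᵥ φ k = φ k then 1 else 0 := by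
    rw [actVecOn_eq_prodVec, star_prodVec_dotProduct_prodVec]
    calc _ = ∏ k, if k ∈ X → O k v *ᵥ φ k = φ k then (1 : ℂ) else 0 := by
          refine Finset.prod_congr rfl fun k _ => ?_
          by_cases hk : k ∈ X
          · have h := star_mulVec_dotProduct_mulVec_eq_ite hO hφ horth k v 1
            rw [hO.one_mulVec] at h
            simp only [hk, if_true, h, forall_const]
          · simp [hk, star_dotProduct_self_eq_one (hφ k)]
      _ = _ := by rw [Fintype.prod_boole]; congr 1
  refine ⟨fun hv => ?_, fun h => ?_⟩
  · have hv : actVecOn O φ X v = prodVec φ := hv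
    rw [hv, star_prodVec_dotProduct_prodVec] at overlap
    simp only [star_dotProduct_self_eq_one (hφ _), Finset.prod_const_one] at overlap
    exact of_not_not fun h => one_ne_zero (overlap.trans (if_neg h))
  · show actVecOn O φ X v = prodVec φ
    rw [actVecOn_eq_prodVec]
    congr 1
    funext k
    split_ifs with hk
    · exact h k hk
    · rfl

theorem reducedOuter_actVec (hO : IsLocalRep O) (hφ : ∀ k, ∑ x : ι k, ‖φ k x‖ ^ 2 = 1)
    (horth : OrthCond O φ) (A : Finset (Fin m)) (t s : Fin n → G) :
    reducedOuter (actVec O φ t) (actVec O φ s) A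
      = if s⁻¹ * t ∈ localStab O φ Aᶜ then
          vecMulVec (phiA (fun k => O k t *ᵥ φ k) A) (star (phiA (fun k => O k s *ᵥ φ k) A))
        else 0 := by
  have overlap : ∏ k : { k : Fin m // k ∉ A }, star (O k s *ᵥ φ k) ⬝ᵥ (O k t *ᵥ φ k)
      = if s⁻¹ * t ∈ localStab O φ Aᶜ then 1 else 0 := by
    simp only [star_mulVec_dotProduct_mulVec_eq_ite hO hφ horth, Fintype.prod_boole,
      hO.mulVec_eq_mulVec_iff, mem_localStab_iff hO hφ horth, Finset.mem_compl, Subtype.forall]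
  rw [actVec_eq_prodVec, actVec_eq_prodVec, reducedOuter_prodVec, overlap, ite_smul, one_smul,
    zero_smul]

end Representation

end GenForm

namespace GenForm

variable {G : Type} [Group G] [Fintype G] {n m : ℕ}
  {ι : Fin m → Type} [∀ k, Fintype (ι k)] [∀ k, DecidableEq (ι k)]

/-- Lemma, reduced density operator: for any partition of the parties
into A and B = Aᶜ,
ρ_A = (1/(|𝒢|·|𝒢_Φ|)) ∑_{u∈𝒢} ∑_{v∈𝒢_Φ(B)} O_A^u |φ_A⟩⟨φ_A| O_A^{v u⁻¹}. -/
theorem reduced_density_formula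
    (O : (k : Fin m) → (Fin n → G) → Matrix (ι k) (ι k) ℂ) (hO : IsLocalRep O)
    (φ : (k : Fin m) → ι k → ℂ) (hφ : ∀ k, ∑ x : ι k, ‖φ k x‖ ^ 2 = 1)
    (horth : OrthCond O φ)
    (A : Finset (Fin m)) :
    rhoA (Psi O φ) A =
      (((((Fintype.card G : ℝ) ^ n * (Nat.card (globalStab O φ) : ℝ))⁻¹ : ℝ)) : ℂ) •
        ∑ u : Fin n → G,
          ∑ v ∈ Finset.univ.filter (· ∈ localStab O φ Aᶜ),
            OAmat O A u *
              Matrix.vecMulVec (phiA φ A) (fun y => (starRingEnd ℂ) (phiA φ A y)) *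
              OAmat O A (v * u⁻¹) := by
  have hscale : ∀ N : ℝ, 0 ≤ N →
      (((√N)⁻¹ : ℝ) : ℂ) * star (((√N)⁻¹ : ℝ) : ℂ) = ((N⁻¹ : ℝ) : ℂ) := fun N hN => by
    rw [Complex.star_def, Complex.conj_ofReal, ← Complex.ofReal_mul, ← mul_inv,
      Real.mul_self_sqrt hN]
  have hstar : (fun y => (starRingEnd ℂ) (phiA φ A y)) = star (phiA φ A) := rfl
  unfold Psi
  rw [hstar, rhoA_eq_reducedOuter, reducedOuter_mul_sum, hscale _ (by positivity)]
  congr 1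
  refine Finset.sum_congr rfl fun u _ => ?_
  rw [← (Equiv.divLeft u).sum_comp, Finset.sum_filter]
  refine Finset.sum_congr rfl fun v _ => ?_
  rw [reducedOuter_actVec hO hφ horth, hO.OAmat_mul_vecMulVec_mul_OAmat]
  simp only [Equiv.divLeft_apply, div_eq_mul_inv, mul_inv_rev, inv_inv, inv_mul_cancel_right]

end GenForm
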